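/- For n ≥ 3, the number of functions c : ZMod n → {Empty, Blue, Red} such that for all i, c(i) and c(i+1) are not equal non-Empty colors (i.e., not both Blue and not both Red) equals (1+√2)^n + (1-√2)^n + (-1)^n, as an identity of real numbers (the left side being a natural number cast to ℝ). -/

import Mathlib

/-!
Going once around the cycle, a colouring is a closed walk of length `n` in the compatibility
relation, so the count is `trace (T ^ n)` for its 0/1 transfer matrix `T`. Since
`T³ = T² + 3T + 1` (the characteristic polynomial is `(X + 1)(X² - 2X - 1)`), the traces satisfy
`u (n + 3) = u (n + 2) + 3 u (n + 1) + u n`, as do the powers of the eigenvalues `-1` and `1 ± √2`;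
both sequences start with `3, 1, 7`.
-/

inductive Color : Type
  | Empty | Blue | Red
  deriving DecidableEq

instance instFintypeColor : Fintype Color where
  elems := {Color.Empty, Color.Blue, Color.Red}
  complete := by
    intro x
    cases x <;> simp

theorem Fin.sum_univ_fun_succ {β M : Type*} [Fintype β] [AddCommMonoid M] {k : ℕ}
    (f : (Fin (k + 1) → β) → M) : ∑ c, f c = ∑ a, ∑ c : Fin k → β, f (Fin.cons a c) := by
  rw [← (Fin.consEquiv fun _ => β).sum_comp, Fintype.sum_prod_type]
  rfl

theorem Fin.snoc_eq_cons_comp_add_one {β : Type*} {k : ℕ} (c : Fin k → β) (a : β) :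
    (Fin.snoc c a : Fin (k + 1) → β) = Fin.cons a c ∘ (· + 1) := by
  funext i
  induction i using Fin.lastCases with
  | last => simp
  | cast j => simp [Fin.coeSucc_eq_succ]

namespace Matrix

variable {α R : Type*} [Fintype α] [DecidableEq α] [CommSemiring R]

theorem pow_succ_apply_eq_sum_prod (A : Matrix α α R) (k : ℕ) (a b : α) :
    (A ^ (k + 1)) a b = ∑ c : Fin k → α,
      ∏ i, A ((Fin.cons a c : Fin (k + 1) → α) i) ((Fin.snoc c b : Fin (k + 1) → α) i) := by
  induction k generalizing a with
  | zero => simp [Fin.snoc]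
  | succ k ih =>
    rw [pow_succ', mul_apply, Fin.sum_univ_fun_succ]
    refine Finset.sum_congr rfl fun m _ => ?_
    rw [ih, Finset.mul_sum]
    refine Finset.sum_congr rfl fun c _ => ?_
    rw [← Fin.cons_snoc_eq_snoc_cons, Fin.prod_univ_succ (n := k + 1)]
    simp

theorem trace_pow_succ_eq_sum_prod (A : Matrix α α R) (k : ℕ) :
    trace (A ^ (k + 1)) = ∑ c : Fin (k + 1) → α, ∏ i, A (c i) (c (i + 1)) := by
  simp only [trace, diag_apply, pow_succ_apply_eq_sum_prod, Fin.snoc_eq_cons_comp_add_one,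
    Fin.sum_univ_fun_succ]
  rfl

theorem trace_pow_eq_sum_prod (A : Matrix α α R) (n : ℕ) [NeZero n] :
    trace (A ^ n) = ∑ c : ZMod n → α, ∏ i, A (c i) (c (i + 1)) := by
  obtain ⟨k, rfl⟩ := Nat.exists_eq_succ_of_ne_zero (NeZero.ne n)
  -- `ZMod (k + 1)` is `Fin (k + 1)` by definition, ring structure included.
  exact trace_pow_succ_eq_sum_prod A k

def transferMatrix (r : α → α → Prop) [DecidableRel r] : Matrix α α R :=
  of fun a b => if r a b then 1 else 0

theorem natCast_card_cycle_eq_trace_transferMatrix_pow (r : α → α → Prop) [DecidableRel r]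
    (n : ℕ) [NeZero n] :
    (Nat.card {c : ZMod n → α // ∀ i, r (c i) (c (i + 1))} : R) =
      trace (transferMatrix r ^ n) := by
  simp only [trace_pow_eq_sum_prod, transferMatrix, of_apply, Fintype.prod_boole,
    Finset.sum_boole, Nat.card_eq_fintype_card, Fintype.card_subtype]

end Matrix

theorem LinearRecurrence.isSolution_trace_pow {α R : Type*} [Fintype α] [DecidableEq α]
    [CommSemiring R] (E : LinearRecurrence R) (A : Matrix α α R)
    (hA : A ^ E.order = ∑ i, E.coeffs i • A ^ (i : ℕ)) :
    E.IsSolution fun n => Matrix.trace (A ^ n) := by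
  intro n
  simp only [pow_add, hA, Finset.mul_sum, Matrix.trace_sum, Matrix.mul_smul, Matrix.trace_smul,
    smul_eq_mul]

open Matrix

def Color.Compatible (a b : Color) : Prop :=
  ¬(a = .Blue ∧ b = .Blue) ∧ ¬(a = .Red ∧ b = .Red)

instance : DecidableRel Color.Compatible := fun _ _ => instDecidableAnd

theorem Color.sum_univ {M : Type*} [AddCommMonoid M] (f : Color → M) :
    ∑ c, f c = f .Empty + f .Blue + f .Red := by
  change ∑ c ∈ {.Empty, .Blue, .Red}, f c = _
  simp [add_assoc]

def colRecurrence : LinearRecurrence ℝ := ⟨3, ![1, 3, 1]⟩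

theorem colRecurrence_isSolution_iff (u : ℕ → ℝ) :
    colRecurrence.IsSolution u ↔ ∀ n, u (n + 3) = u n + 3 * u (n + 1) + u (n + 2) := by
  change (∀ n, u (n + 3) = ∑ i : Fin 3, ![1, 3, 1] i * u (n + i)) ↔ _
  simp [Fin.sum_univ_three]

theorem colRecurrence_isSolution_pow {q : ℝ} (hq : q ^ 3 = 1 + 3 * q + q ^ 2) :
    colRecurrence.IsSolution fun n => q ^ n :=
  (colRecurrence_isSolution_iff _).2 fun n => by linear_combination q ^ n * hq

theorem colRecurrence_isSolution_closedForm :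
    colRecurrence.IsSolution fun n => (1 + √2) ^ n + (1 - √2) ^ n + (-1) ^ n := by
  have h2 : √2 ^ 2 = 2 := Real.sq_sqrt zero_le_two
  have hroot {q : ℝ} (hq : q ^ 3 = 1 + 3 * q + q ^ 2) : (fun n => q ^ n) ∈ colRecurrence.solSpace :=
    (colRecurrence.is_sol_iff_mem_solSpace _).1 (colRecurrence_isSolution_pow hq)
  refine (colRecurrence.is_sol_iff_mem_solSpace _).2 (add_mem (add_mem (hroot ?_) (hroot ?_))
    (hroot ?_))
  · linear_combination (2 + √2) * h2
  · linear_combination (2 - √2) * h2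
  · norm_num

theorem transferMatrix_compatible_cube :
    (transferMatrix Color.Compatible : Matrix Color Color ℝ) ^ 3 =
      1 + (3 : ℝ) • transferMatrix Color.Compatible + transferMatrix Color.Compatible ^ 2 := by
  ext a b
  simp only [pow_succ, pow_zero, one_mul, Matrix.add_apply, Matrix.smul_apply, mul_apply,
    Color.sum_univ]
  cases a <;> cases b <;> simp [transferMatrix, Color.Compatible, one_apply] <;> norm_num

theorem trace_transferMatrix_compatible_pow (n : ℕ) :
    trace ((transferMatrix Color.Compatible : Matrix Color Color ℝ) ^ n) =
      (1 + √2) ^ n + (1 - √2) ^ n + (-1) ^ n := by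
  have hT : colRecurrence.IsSolution fun n =>
      trace ((transferMatrix Color.Compatible : Matrix Color Color ℝ) ^ n) := by
    refine colRecurrence.isSolution_trace_pow _ ?_
    change _ ^ 3 = ∑ i : Fin 3, ![1, 3, 1] i • _
    simp [Fin.sum_univ_three, transferMatrix_compatible_cube]
  refine congrFun ((colRecurrence.eq_iff_eqOn_range_order _ _ hT
    colRecurrence_isSolution_closedForm).2 fun m hm => ?_) n
  have h2 : √2 ^ 2 = 2 := Real.sq_sqrt zero_le_two
  simp only [colRecurrence, Finset.coe_range, Set.mem_Iio] at hm
  interval_cases m <;>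
    simp only [sq, pow_one, pow_zero, trace, diag_apply, mul_apply, Color.sum_univ] <;>
    simp [transferMatrix, Color.Compatible, one_apply]
  linear_combination (-2) * h2

theorem colCycle_count (n : ℕ) (hn : 3 ≤ n) :
    (Nat.card {c : ZMod n → Color //
        ∀ i : ZMod n,
          ¬(c i = Color.Blue ∧ c (i + 1) = Color.Blue) ∧
          ¬(c i = Color.Red ∧ c (i + 1) = Color.Red)} : ℝ) =
      (1 + Real.sqrt 2) ^ n + (1 - Real.sqrt 2) ^ n + (-1) ^ n := by
  have : NeZero n := ⟨by omega⟩
  exact (natCast_card_cycle_eq_trace_transferMatrix_pow Color.Compatible n).trans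
    (trace_transferMatrix_compatible_pow n)
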